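/- Let k be a nonnegative integer. Then there exist rational numbers ξ_0, ξ_1, ..., ξ_{k−1}, depending only on k, such that for every strict partition λ and every index i for which λ^{i+} := λ ∪ {□_i} (the strict partition obtained by adding a box of content x_i) exists, q_k(λ^{i+}) − q_k(λ) = Σ_{j=0}^{k−1} ξ_j · C(x_i,2)^j. Equivalently, q_k(λ^{i+}) − q_k(λ) = C(x_i+1,2)^k + C(x_i−1,2)^k − 2·C(x_i,2)^k. -/

import Mathlib

open scoped BigOperators

/-- A strict partition: a strictly decreasing list of positive integers. -/
structure StrictPartition where
  parts : List ℕ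
  pos : ∀ p ∈ parts, 0 < p
  sorted : parts.Pairwise (· > ·)

namespace StrictPartition

/-- The `i`-th part (1-indexed); `0` for `i` beyond the length. -/
def part (lam : StrictPartition) (i : ℕ) : ℕ := lam.parts.getD (i - 1) 0

/-- The size `|λ|` of a strict partition. -/
def size (lam : StrictPartition) : ℕ := lam.parts.sum

/-- The length `ℓ(λ)` (number of parts) of a strict partition. -/
def length (lam : StrictPartition) : ℕ := lam.parts.length

/-- The cells of the shifted Young diagram: row `i` occupies columns `i+1, …, i+λᵢ`. -/
def cells (lam : StrictPartition) : Finset (ℕ × ℕ) :=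
  (Finset.range (lam.size + lam.length + 2) ×ˢ
      Finset.range (lam.size + lam.length + 2)).filter
    (fun b => 1 ≤ b.1 ∧ b.1 < b.2 ∧ b.2 ≤ b.1 + lam.part b.1)

/-- The content of a box `(i,j)` is `j - i`. -/
def content (b : ℕ × ℕ) : ℕ := b.2 - b.1

/-- The hook length of a box `(i,j)`: the number of boxes strictly below it in its
column, plus the number strictly to its right in its row, plus `1`, plus `λ_j`. -/
def hook (lam : StrictPartition) (b : ℕ × ℕ) : ℕ :=
  (lam.cells.filter (fun b' => b'.2 = b.2 ∧ b.1 < b'.1)).card +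
  (lam.cells.filter (fun b' => b'.1 = b.1 ∧ b.2 < b'.2)).card + 1 + lam.part b.2

/-- `H_λ`, the product of the hook lengths of all boxes of `λ`. -/
def H (lam : StrictPartition) : ℕ := ∏ b ∈ lam.cells, lam.hook b

/-- `μ ≤ λ` iff `μᵢ ≤ λᵢ` for all `i`. -/
instance : LE StrictPartition := ⟨fun mu lam => ∀ i, mu.part i ≤ lam.part i⟩

/-- The cells of the skew shifted diagram `λ/μ`. -/
def skewCells (mu lam : StrictPartition) : Finset (ℕ × ℕ) := lam.cells \ mu.cells

/-- `f_{λ/μ}`: the number of standard shifted Young tableaux of skew shape `λ/μ`,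
i.e. bijective fillings of the cells of `λ/μ` with `0, 1, …, n-1` increasing along
rows and columns. -/
noncomputable def fskew (mu lam : StrictPartition) : ℕ :=
  Nat.card {T : {b // b ∈ skewCells mu lam} → Fin (skewCells mu lam).card //
    Function.Bijective T ∧
    (∀ a b : {b // b ∈ skewCells mu lam},
      (a : ℕ × ℕ).1 = (b : ℕ × ℕ).1 → (a : ℕ × ℕ).2 < (b : ℕ × ℕ).2 → T a < T b) ∧
    (∀ a b : {b // b ∈ skewCells mu lam},
      (a : ℕ × ℕ).2 = (b : ℕ × ℕ).2 → (a : ℕ × ℕ).1 < (b : ℕ × ℕ).1 → T a < T b)}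

/-- The empty strict partition. -/
def empty : StrictPartition := ⟨[], by simp, List.Pairwise.nil⟩

/-- `f_λ`: the number of standard shifted Young tableaux of shape `λ`. -/
noncomputable def f (lam : StrictPartition) : ℕ := fskew empty lam

/-- `f'_{λ/μ} = 2^{|λ|-|μ|-ℓ(λ)+ℓ(μ)} f_{λ/μ}`. -/
noncomputable def fPrime (mu lam : StrictPartition) : ℚ :=
  (2 : ℚ) ^ ((lam.size : ℤ) - mu.size - lam.length + mu.length) * fskew mu lam

/-- `λ⁺` is obtained from `λ` by adding one box. -/
def AddBox (lam lam' : StrictPartition) : Prop := lam ≤ lam' ∧ lam'.size = lam.size + 1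

/-- The difference operator `D` for strict partitions. -/
noncomputable def D (g : StrictPartition → ℚ) (lam : StrictPartition) : ℚ :=
  (∑ᶠ nu ∈ {nu : StrictPartition | lam.AddBox nu ∧ lam.length < nu.length}, g nu) +
  2 * (∑ᶠ nu ∈ {nu : StrictPartition | lam.AddBox nu ∧ nu.length = lam.length}, g nu) -
  g lam

/-- The boxes that can be removed from `λ` leaving (the diagram of) a strict
partition: the outer corners. -/
def removableCells (lam : StrictPartition) : Set (ℕ × ℕ) :=
  {b | b ∈ lam.cells ∧ ∃ mu : StrictPartition, mu.cells = lam.cells.erase b}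

/-- The boxes that can be added to `λ` giving (the diagram of) a strict partition. -/
def addableCells (lam : StrictPartition) : Set (ℕ × ℕ) :=
  {b | b ∉ lam.cells ∧ ∃ mu : StrictPartition, mu.cells = insert b lam.cells}

/-- The contents `x_0 = 1 < x_1 < ⋯ < x_m` of the inner corners of `λ`. -/
def innerContents (lam : StrictPartition) : Set ℕ :=
  insert 1 (content '' lam.addableCells)

/-- The contents `y_1 < ⋯ < y_m` of the outer corners of `λ`. -/
def outerContents (lam : StrictPartition) : Set ℕ :=
  content '' lam.removableCells

/-- `q_k(λ) = ∑_{i=0}^m C(xᵢ,2)^k − ∑_{i=1}^m C(yᵢ,2)^k`. -/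
noncomputable def q (k : ℕ) (lam : StrictPartition) : ℚ :=
  (∑ᶠ c ∈ lam.innerContents, ((c.choose 2 : ℚ)) ^ k) -
  (∑ᶠ c ∈ lam.outerContents, ((c.choose 2 : ℚ)) ^ k)

/-- `q_ν(λ) = ∏_j q_{ν_j}(λ)` for a partition `ν` given as a multiset of parts. -/
noncomputable def qPart (nu : Multiset ℕ) (lam : StrictPartition) : ℚ :=
  (nu.map (fun k => q k lam)).prod

end StrictPartition

/-!
Reading the corners off the parts of `λ`: the parts split into maximal runs of consecutive
integers, each run `a, a+1, …, b` having an outer corner of content `a` and an inner corner of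
content `b + 1`. Hence `q_k(λ) = F(1) + ∑_{p ∈ λ} (F(p+1) - F(p))` with `F(x) = C(x,2)^k`, by
telescoping along the runs. Adding a box of content `x` replaces the part `x - 1` by `x` (or adds
a part `1`), so `q_k` changes by the second difference `F(x+1) - 2F(x) + F(x-1)`. Writing
`T = C(x,2)`, we have `C(x+1,2) = T + x` and `C(x-1,2) = T + 1 - x`, and the power sum
`(T + x)^k + (T + 1 - x)^k` is a polynomial in `T` equal to `2T^k` plus terms of degree `< k`.
-/

section

open Polynomial

theorem Polynomial.mul_mem_degreeLT {R : Type*} [Semiring R] {p q : R[X]} {m n : ℕ}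
    (hq : q.natDegree ≤ n) (hp : p ∈ degreeLT R m) : q * p ∈ degreeLT R (n + m) := by
  rcases eq_or_ne p 0 with rfl | hp0
  · simp
  rw [mem_degreeLT, ← natDegree_lt_iff_degree_lt hp0] at hp
  rw [mem_degreeLT]
  refine degree_le_natDegree.trans_lt ?_
  exact_mod_cast natDegree_mul_le.trans_lt (by omega)

/-- For `2T = u(u-1)` the numbers `a = T + u` and `b = T + 1 - u` have `a + b = 2T + 1` and
`ab = T² - T`, so `sₘ = aᵐ + bᵐ` satisfies `sₘ₊₂ = (2T + 1) sₘ₊₁ - (T² - T) sₘ`. -/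
theorem exists_pow_add_pow_eq_two_mul_pow_add_eval (m : ℕ) :
    ∃ R ∈ degreeLT ℚ m, ∀ T u : ℚ, 2 * T = u * (u - 1) →
      (T + u) ^ m + (T + 1 - u) ^ m = 2 * T ^ m + R.eval T := by
  induction m using Nat.twoStepInduction with
  | zero => exact ⟨0, zero_mem _, fun T u _ => by norm_num⟩
  | one => exact ⟨1, by rw [mem_degreeLT]; simp, fun T u _ => by simp; ring⟩
  | more m ih₀ ih₁ =>
    obtain ⟨R₀, hR₀, h₀⟩ := ih₀
    obtain ⟨R₁, hR₁, h₁⟩ := ih₁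
    refine ⟨C 4 * X ^ (m + 1) + (C 2 * X + 1) * R₁ - (X ^ 2 - X) * R₀, ?_, fun T u hT => ?_⟩
    · refine sub_mem (add_mem ?_ ?_) ?_
      · rw [mem_degreeLT]
        exact (degree_C_mul_X_pow_le _ _).trans_lt (by exact_mod_cast Nat.lt_succ_self _)
      · have h : (C 2 * X + 1 : ℚ[X]).natDegree ≤ 1 := by compute_degree
        simpa only [Nat.add_comm 1] using mul_mem_degreeLT h hR₁
      · have h : (X ^ 2 - X : ℚ[X]).natDegree ≤ 2 := by compute_degree
        simpa only [Nat.add_comm 2] using mul_mem_degreeLT h hR₀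
    · have hrec : (T + u) ^ (m + 2) + (T + 1 - u) ^ (m + 2) =
          (2 * T + 1) * ((T + u) ^ (m + 1) + (T + 1 - u) ^ (m + 1)) -
            (T ^ 2 - T) * ((T + u) ^ m + (T + 1 - u) ^ m) := by
        linear_combination (-(T + u) ^ m - (T + 1 - u) ^ m) * hT
      rw [hrec, h₀ T u hT, h₁ T u hT]
      simp only [eval_add, eval_sub, eval_mul, eval_pow, eval_C, eval_X, eval_one]
      ring

theorem exists_choose_two_pow_second_difference (k : ℕ) :
    ∃ ξ : ℕ → ℚ, ∀ x : ℕ, 1 ≤ x →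
      ((x + 1).choose 2 : ℚ) ^ k + ((x - 1).choose 2 : ℚ) ^ k - 2 * (x.choose 2 : ℚ) ^ k =
        ∑ j ∈ Finset.range k, ξ j * (x.choose 2 : ℚ) ^ j := by
  obtain ⟨R, hR, hRT⟩ := exists_pow_add_pow_eq_two_mul_pow_add_eval k
  refine ⟨R.coeff, fun x hx => ?_⟩
  have hT : 2 * (x.choose 2 : ℚ) = x * (x - 1) := by rw [Nat.cast_choose_two]; ring
  have hsucc : ((x + 1).choose 2 : ℚ) = x.choose 2 + x := by
    rw [Nat.cast_choose_two, Nat.cast_choose_two]; push_cast; ring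
  have hpred : ((x - 1).choose 2 : ℚ) = x.choose 2 + 1 - x := by
    rw [Nat.cast_choose_two, Nat.cast_choose_two, Nat.cast_sub hx]; push_cast; ring
  rw [hsucc, hpred, hRT _ _ hT, add_sub_cancel_left, eval_eq_sum_degreeLTEquiv hR]
  exact Fin.sum_univ_eq_sum_range (fun j => R.coeff j * (x.choose 2 : ℚ) ^ j) k

end

theorem Finset.sum_succ_sub_eq_sum_filter_sub_sum_filter {M : Type*} [AddCommGroup M]
    (S : Finset ℕ) (hS : 0 ∉ S) (F : ℕ → M) :
    ∑ p ∈ S, (F (p + 1) - F p) =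
      ∑ p ∈ S.filter (fun p => p + 1 ∉ S), F (p + 1) -
        ∑ p ∈ S.filter (fun p => p - 1 ∉ S), F p := by
  have hpred : ∀ p ∈ S, p - 1 + 1 = p := fun p hp =>
    Nat.sub_add_cancel (Nat.one_le_iff_ne_zero.mpr (ne_of_mem_of_not_mem hp hS))
  have hshift : ∑ p ∈ S.filter (fun p => p + 1 ∈ S), F (p + 1) =
      ∑ p ∈ S.filter (fun p => p - 1 ∈ S), F p := by
    refine Finset.sum_nbij' (· + 1) (· - 1) (fun p hp => by simp_all) (fun p hp => ?_)
      (fun p _ => Nat.add_sub_cancel p 1) (fun p hp => hpred p (Finset.mem_filter.mp hp).1)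
      (fun _ _ => rfl)
    rw [Finset.mem_filter] at hp ⊢
    rw [hpred p hp.1]
    exact hp.symm
  rw [Finset.sum_sub_distrib, ← Finset.sum_filter_add_sum_filter_not S (fun p => p + 1 ∈ S),
    ← Finset.sum_filter_add_sum_filter_not S (fun p => p - 1 ∈ S), hshift]
  abel

namespace StrictPartition

variable {lam mu : StrictPartition} {i j r v p : ℕ}

theorem part_ne_zero_iff (hi : 1 ≤ i) : lam.part i ≠ 0 ↔ i ≤ lam.length := by
  unfold part length
  constructor
  · intro h
    by_contra hlt
    exact h (List.getD_eq_default _ _ (by omega))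
  · intro h
    rw [List.getD_eq_getElem _ _ (by omega)]
    exact (lam.pos _ (List.getElem_mem _)).ne'

theorem part_eq_zero_iff (hi : 1 ≤ i) : lam.part i = 0 ↔ lam.length < i := by
  rw [← not_iff_not, not_lt]
  exact part_ne_zero_iff hi

theorem part_le_size (lam : StrictPartition) (i : ℕ) : lam.part i ≤ lam.size := by
  unfold part size
  rcases lt_or_ge (i - 1) lam.parts.length with h | h
  · rw [List.getD_eq_getElem _ _ h]
    exact List.le_sum_of_mem (List.getElem_mem _)
  · rw [List.getD_eq_default _ _ h]
    exact Nat.zero_le _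

theorem part_lt_part (hi : 1 ≤ i) (hij : i < j) (hj : lam.part j ≠ 0) :
    lam.part j < lam.part i := by
  have hjl := (part_ne_zero_iff (by omega)).mp hj
  unfold part length at *
  rw [List.getD_eq_getElem _ _ (by omega), List.getD_eq_getElem _ _ (by omega)]
  exact List.pairwise_iff_getElem.mp lam.sorted _ _ _ _ (by omega)

theorem part_injOn (hi : 1 ≤ i) (hj : 1 ≤ j) (hij : lam.part i = lam.part j)
    (h0 : lam.part i ≠ 0) : i = j := by
  rcases lt_trichotomy i j with h | h | h
  · exact absurd (part_lt_part hi h (hij ▸ h0)) (by omega)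
  · exact h
  · exact absurd (part_lt_part hj h h0) (by omega)

theorem mem_parts_iff : p ∈ lam.parts ↔ p ≠ 0 ∧ ∃ i, 1 ≤ i ∧ lam.part i = p := by
  constructor
  · intro h
    obtain ⟨n, hn, rfl⟩ := List.mem_iff_getElem.mp h
    refine ⟨(lam.pos _ h).ne', n + 1, by omega, ?_⟩
    simp [part, hn]
  · rintro ⟨h0, i, hi, rfl⟩
    have hil := (part_ne_zero_iff hi).mp h0
    unfold part length at *
    rw [List.getD_eq_getElem _ _ (by omega)]
    exact List.getElem_mem _

theorem mem_cells : (i, j) ∈ lam.cells ↔ 1 ≤ i ∧ i < j ∧ j ≤ i + lam.part i := by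
  refine ⟨fun h => (Finset.mem_filter.mp h).2, fun h => Finset.mem_filter.mpr ⟨?_, h⟩⟩
  obtain ⟨h1, h2, h3⟩ := h
  have hlen := (part_ne_zero_iff (lam := lam) h1).mp (by omega)
  have hsize := lam.part_le_size i
  simp only [Finset.mem_product, Finset.mem_range]
  omega

theorem part_eq_of_forall_mem_cells_iff (hi : 1 ≤ i)
    (h : ∀ j, (i, j) ∈ lam.cells ↔ (i, j) ∈ mu.cells) : lam.part i = mu.part i := by
  have hlam := h (i + lam.part i)
  have hmu := h (i + mu.part i)
  simp only [mem_cells] at hlam hmu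
  omega

theorem part_eq_update_of_cells_eq_insert (hb : (r, j) ∉ lam.cells)
    (h : mu.cells = insert (r, j) lam.cells) :
    1 ≤ r ∧ j = r + lam.part r + 1 ∧
      ∀ i, 1 ≤ i → mu.part i = Function.update lam.part r (lam.part r + 1) i := by
  have hmem : ∀ i j', (i, j') ∈ mu.cells ↔ (i = r ∧ j' = j) ∨ (i, j') ∈ lam.cells := by
    simp [h]
  obtain ⟨hr, hrj, hjmu⟩ := mem_cells.mp ((hmem r j).mpr (Or.inl ⟨rfl, rfl⟩))
  have hjlam : r + lam.part r < j := by
    by_contra! h'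
    exact hb (mem_cells.mpr ⟨hr, hrj, h'⟩)
  have hj : j = r + lam.part r + 1 := by
    have := (hmem r (r + lam.part r + 1)).mp (mem_cells.mpr ⟨hr, by omega, by omega⟩)
    rw [mem_cells] at this
    omega
  have hrow : mu.part r = lam.part r + 1 := by
    have := (hmem r (r + mu.part r)).mp (mem_cells.mpr ⟨hr, by omega, le_rfl⟩)
    rw [mem_cells] at this
    omega
  refine ⟨hr, hj, fun i hi => ?_⟩
  rcases eq_or_ne i r with rfl | hir
  · rw [Function.update_self, hrow]
  · rw [Function.update_of_ne hir]
    refine (part_eq_of_forall_mem_cells_iff hi fun j' => ?_).symm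
    rw [hmem, or_iff_right (fun h => hir h.1)]

theorem cells_eq_insert_of_part_eq_update (hr : 1 ≤ r)
    (h : ∀ i, 1 ≤ i → mu.part i = Function.update lam.part r (lam.part r + 1) i) :
    mu.cells = insert (r, r + lam.part r + 1) lam.cells := by
  ext ⟨i, j⟩
  simp only [Finset.mem_insert, mem_cells, Prod.mk.injEq]
  rcases eq_or_ne i r with rfl | hir
  · rw [h i hr, Function.update_self]
    omega
  · constructor
    · rintro ⟨hi, hij, hj⟩
      rw [h i hi, Function.update_of_ne hir] at hj
      exact Or.inr ⟨hi, hij, hj⟩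
    · rintro (⟨rfl, -⟩ | ⟨hi, hij, hj⟩)
      · exact absurd rfl hir
      · rw [h i hi, Function.update_of_ne hir]
        exact ⟨hi, hij, hj⟩

theorem parts_toFinset_eq_of_part_eq_update (hr : 1 ≤ r) (hv : v ≠ 0)
    (h : ∀ i, 1 ≤ i → mu.part i = Function.update lam.part r v i) :
    mu.parts.toFinset = insert v (lam.parts.toFinset.erase (lam.part r)) := by
  ext p
  simp only [List.mem_toFinset, Finset.mem_insert, Finset.mem_erase, mem_parts_iff]
  constructor
  · rintro ⟨hp, i, hi, rfl⟩
    rcases eq_or_ne i r with rfl | hir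
    · left
      rw [h i hi, Function.update_self]
    · rw [h i hi, Function.update_of_ne hir] at hp ⊢
      exact Or.inr ⟨fun h' => hir (part_injOn hi hr h' hp), hp, i, hi, rfl⟩
  · rintro (rfl | ⟨hpr, hp, i, hi, rfl⟩)
    · exact ⟨hv, r, hr, by rw [h r hr, Function.update_self]⟩
    · have hir : i ≠ r := by rintro rfl; exact hpr rfl
      exact ⟨hp, i, hi, by rw [h i hi, Function.update_of_ne hir]⟩

theorem exists_part_eq (n : ℕ) (p : ℕ → ℕ) (hpos : ∀ i, 1 ≤ i → i ≤ n → p i ≠ 0)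
    (hanti : ∀ i, 1 ≤ i → i < n → p (i + 1) < p i) (hzero : ∀ i, n < i → p i = 0) :
    ∃ mu : StrictPartition, ∀ i, 1 ≤ i → mu.part i = p i := by
  have hlt : ∀ a b, a < b → b < n → p (b + 1) < p (a + 1) := by
    intro a b hab hbn
    induction hab with
    | refl => exact hanti (a + 1) (by omega) hbn
    | step hab ih => exact (hanti _ (by omega) hbn).trans (ih (by omega))
  refine ⟨⟨(List.range n).map (fun i => p (i + 1)), ?_, ?_⟩, fun i hi => ?_⟩
  · simp only [List.mem_map, List.mem_range]
    rintro _ ⟨a, ha, rfl⟩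
    exact Nat.pos_of_ne_zero (hpos _ (by omega) (by omega))
  · exact List.pairwise_map.mpr <| List.pairwise_lt_range.imp_of_mem fun ha hb hab =>
      hlt _ _ hab (List.mem_range.mp hb)
  · simp only [part, List.getD_eq_getElem?_getD, List.getElem?_map]
    rcases lt_or_ge (i - 1) n with hin | hin
    · simp [List.getElem?_range hin, Nat.sub_add_cancel hi]
    · simp [List.getElem?_eq_none (l := List.range n) (by simpa using hin), hzero i (by omega)]

theorem exists_part_eq_update (hr : 1 ≤ r) (hrlen : r ≤ lam.length)
    (habove : 2 ≤ r → v < lam.part (r - 1))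
    (hbelow : lam.part (r + 1) < v ∨ v = 0 ∧ r = lam.length) :
    ∃ mu : StrictPartition, ∀ i, 1 ≤ i → mu.part i = Function.update lam.part r v i := by
  have hpos : ∀ i, 1 ≤ i → i ≤ lam.length → lam.part i ≠ 0 := fun i hi =>
    (part_ne_zero_iff hi).mpr
  have hzero : ∀ i, lam.length < i → lam.part i = 0 := fun i hi =>
    (part_eq_zero_iff (by omega)).mpr hi
  have hstep : ∀ i, 1 ≤ i → i < lam.length → lam.part (i + 1) < lam.part i := fun i hi hin =>
    part_lt_part hi i.lt_add_one (hpos _ (by omega) hin)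
  rcases hbelow with hbelow | ⟨rfl, rfl⟩
  · refine exists_part_eq lam.length _ (fun i hi hin => ?_) (fun i hi hin => ?_) (fun i hin => ?_)
    · rcases eq_or_ne i r with rfl | hir
      · rw [Function.update_self]; omega
      · rw [Function.update_of_ne hir]; exact hpos i hi hin
    · rcases eq_or_ne i r with rfl | hir
      · rwa [Function.update_self, Function.update_of_ne (by omega)]
      rcases eq_or_ne (i + 1) r with rfl | hir'
      · rw [Function.update_self, Function.update_of_ne hir]
        simpa using habove (by omega)
      · rw [Function.update_of_ne hir', Function.update_of_ne hir]
        exact hstep i hi hin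
    · rw [Function.update_of_ne (by omega)]
      exact hzero i hin
  · refine exists_part_eq (lam.length - 1) _ (fun i hi hin => ?_) (fun i hi hin => ?_)
      (fun i hin => ?_)
    · rw [Function.update_of_ne (by omega)]
      exact hpos i hi (by omega)
    · rw [Function.update_of_ne (by omega), Function.update_of_ne (by omega)]
      exact hstep i hi (by omega)
    · rcases eq_or_ne i lam.length with rfl | hir
      · exact Function.update_self ..
      · rw [Function.update_of_ne hir]
        exact hzero i (by omega)

theorem exists_part_eq_update_succ (hr : 1 ≤ r) (hpart : lam.part r ≠ 0)
    (hgap : lam.part r + 1 ∉ lam.parts) :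
    ∃ mu : StrictPartition, ∀ i, 1 ≤ i →
      mu.part i = Function.update lam.part r (lam.part r + 1) i := by
  refine exists_part_eq_update hr ((part_ne_zero_iff hr).mp hpart) (fun hr2 => ?_) (Or.inl ?_)
  · have hlt := part_lt_part (by omega : 1 ≤ r - 1) (by omega) hpart
    have hne : lam.part (r - 1) ≠ lam.part r + 1 := fun h =>
      hgap (mem_parts_iff.mpr ⟨by omega, r - 1, by omega, h⟩)
    omega
  · rcases eq_or_ne (lam.part (r + 1)) 0 with h | h
    · omega
    · have := part_lt_part hr r.lt_add_one h
      omega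

theorem exists_part_eq_update_pred (hr : 1 ≤ r) (hpart : lam.part r ≠ 0)
    (hgap : lam.part r - 1 ∉ lam.parts) :
    ∃ mu : StrictPartition, ∀ i, 1 ≤ i →
      mu.part i = Function.update lam.part r (lam.part r - 1) i := by
  have hrlen := (part_ne_zero_iff hr).mp hpart
  refine exists_part_eq_update hr hrlen (fun hr2 => ?_) ?_
  · have := part_lt_part (by omega : 1 ≤ r - 1) (by omega) hpart
    omega
  · rcases eq_or_ne (lam.part (r + 1)) 0 with h | h
    · have := (part_eq_zero_iff (by omega)).mp h
      omega
    · have hlt := part_lt_part hr r.lt_add_one h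
      have hne : lam.part (r + 1) ≠ lam.part r - 1 := fun h' =>
        hgap (mem_parts_iff.mpr ⟨by omega, r + 1, by omega, h'⟩)
      omega

theorem notMem_cells_row_succ (lam : StrictPartition) (r : ℕ) :
    (r, r + lam.part r + 1) ∉ lam.cells := by
  rw [mem_cells]
  omega

theorem content_eq_part_add_one_of_cells_eq_insert (hb : (r, j) ∉ lam.cells)
    (h : mu.cells = insert (r, j) lam.cells) : content (r, j) = lam.part r + 1 := by
  obtain ⟨-, hj, -⟩ := part_eq_update_of_cells_eq_insert hb h
  simp only [content, hj]
  omega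

theorem content_notMem_parts_of_cells_eq_insert (hb : (r, j) ∉ lam.cells)
    (h : mu.cells = insert (r, j) lam.cells) : content (r, j) ∉ lam.parts := by
  have hx := content_eq_part_add_one_of_cells_eq_insert hb h
  obtain ⟨hr, -, hmu⟩ := part_eq_update_of_cells_eq_insert hb h
  rw [mem_parts_iff]
  rintro ⟨-, i, hi, hix⟩
  rcases eq_or_ne i r with rfl | hir
  · omega
  · have hmur : mu.part r = content (r, j) := by rw [hmu r hr, Function.update_self, hx]
    have hmui : mu.part i = content (r, j) := by rw [hmu i hi, Function.update_of_ne hir, hix]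
    exact hir (part_injOn hi hr (hmui.trans hmur.symm) (by omega))

theorem parts_toFinset_of_cells_eq_insert (hb : (r, j) ∉ lam.cells)
    (h : mu.cells = insert (r, j) lam.cells) :
    mu.parts.toFinset =
      insert (content (r, j)) (lam.parts.toFinset.erase (content (r, j) - 1)) := by
  have hx := content_eq_part_add_one_of_cells_eq_insert hb h
  obtain ⟨hr, -, hmu⟩ := part_eq_update_of_cells_eq_insert hb h
  rw [parts_toFinset_eq_of_part_eq_update hr (Nat.succ_ne_zero _) hmu, hx, Nat.add_sub_cancel]

theorem innerContents_eq (lam : StrictPartition) :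
    lam.innerContents = ↑(insert 1
      ((lam.parts.toFinset.filter (fun p => p + 1 ∉ lam.parts.toFinset)).image (· + 1))) := by
  ext c
  simp only [innerContents, addableCells, Finset.coe_insert, Set.mem_insert_iff, Set.mem_image,
    Set.mem_ofPred_eq, Finset.coe_image, Finset.coe_filter, List.mem_toFinset]
  refine or_congr_right' fun hc => ⟨?_, ?_⟩
  · rintro ⟨⟨r, j⟩, ⟨hb, mu, h⟩, rfl⟩
    have hx := content_eq_part_add_one_of_cells_eq_insert hb h
    have hr := (part_eq_update_of_cells_eq_insert hb h).1
    refine ⟨lam.part r, ⟨mem_parts_iff.mpr ⟨by omega, r, hr, rfl⟩, ?_⟩, hx.symm⟩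
    rw [← hx]
    exact content_notMem_parts_of_cells_eq_insert hb h
  · rintro ⟨p, ⟨hp, hgap⟩, rfl⟩
    obtain ⟨hp0, r, hr, rfl⟩ := mem_parts_iff.mp hp
    obtain ⟨mu, hmu⟩ := exists_part_eq_update_succ hr hp0 hgap
    refine ⟨_, ⟨lam.notMem_cells_row_succ r, mu, cells_eq_insert_of_part_eq_update hr hmu⟩, ?_⟩
    simp only [content]
    omega

theorem outerContents_eq (lam : StrictPartition) :
    lam.outerContents = ↑(lam.parts.toFinset.filter (fun p => p - 1 ∉ lam.parts.toFinset)) := by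
  ext c
  simp only [outerContents, removableCells, Set.mem_image, Set.mem_ofPred_eq,
    Finset.coe_filter, List.mem_toFinset]
  constructor
  · rintro ⟨⟨r, j⟩, ⟨hb, mu, h⟩, rfl⟩
    have hins : lam.cells = insert (r, j) mu.cells := by rw [h, Finset.insert_erase hb]
    have hbmu : (r, j) ∉ mu.cells := by rw [h]; exact Finset.notMem_erase _ _
    have hx := content_eq_part_add_one_of_cells_eq_insert hbmu hins
    have hparts := parts_toFinset_of_cells_eq_insert hbmu hins
    simp only [← List.mem_toFinset, hparts, Finset.mem_insert, Finset.mem_erase]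
    exact ⟨Or.inl trivial, by rintro (h' | ⟨h', -⟩) <;> omega⟩
  · rintro ⟨hp, hgap⟩
    obtain ⟨hp0, r, hr, rfl⟩ := mem_parts_iff.mp hp
    obtain ⟨mu, hmu⟩ := exists_part_eq_update_pred hr hp0 hgap
    have hlam : ∀ i, 1 ≤ i → lam.part i = Function.update mu.part r (mu.part r + 1) i := by
      intro i hi
      rcases eq_or_ne i r with rfl | hir
      · rw [Function.update_self, hmu i hi, Function.update_self]
        omega
      · rw [Function.update_of_ne hir, hmu i hi, Function.update_of_ne hir]
    have hins := cells_eq_insert_of_part_eq_update hr hlam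
    refine ⟨(r, r + mu.part r + 1), ⟨?_, mu, ?_⟩, ?_⟩
    · rw [hins]
      exact Finset.mem_insert_self _ _
    · rw [hins, Finset.erase_insert (mu.notMem_cells_row_succ r)]
    · simp only [content, hmu r hr, Function.update_self]
      omega

theorem zero_notMem_parts_toFinset (lam : StrictPartition) : 0 ∉ lam.parts.toFinset := by
  rw [List.mem_toFinset]
  exact fun h => (lam.pos 0 h).false

theorem q_eq_sum_parts (k : ℕ) (lam : StrictPartition) :
    q k lam = ((1 : ℕ).choose 2 : ℚ) ^ k +
      ∑ p ∈ lam.parts.toFinset, (((p + 1).choose 2 : ℚ) ^ k - (p.choose 2 : ℚ) ^ k) := by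
  have h1 :
      1 ∉ (lam.parts.toFinset.filter (fun p => p + 1 ∉ lam.parts.toFinset)).image (· + 1) := by
    simp only [Finset.mem_image, Finset.mem_filter, Nat.add_eq_right, not_exists, not_and]
    rintro _ ⟨h, -⟩ rfl
    exact lam.zero_notMem_parts_toFinset h
  rw [q, innerContents_eq, outerContents_eq, finsum_mem_coe_finset, finsum_mem_coe_finset,
    Finset.sum_insert h1, Finset.sum_image (fun _ _ _ _ => Nat.add_right_cancel),
    Finset.sum_succ_sub_eq_sum_filter_sub_sum_filter _ lam.zero_notMem_parts_toFinset
      (fun c => (c.choose 2 : ℚ) ^ k)]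
  abel

theorem q_sub_q_of_cells_eq_insert (k : ℕ) (hb : (r, j) ∉ lam.cells)
    (h : mu.cells = insert (r, j) lam.cells) :
    q k mu - q k lam =
      ((content (r, j) + 1).choose 2 : ℚ) ^ k + ((content (r, j) - 1).choose 2 : ℚ) ^ k -
        2 * ((content (r, j)).choose 2 : ℚ) ^ k := by
  set x := content (r, j)
  set g : ℕ → ℚ := fun p => ((p + 1).choose 2 : ℚ) ^ k - (p.choose 2 : ℚ) ^ k with hg
  have hx : x = lam.part r + 1 := content_eq_part_add_one_of_cells_eq_insert hb h
  have hxS : x ∉ lam.parts.toFinset.erase (x - 1) := fun hmem =>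
    content_notMem_parts_of_cells_eq_insert hb h
      (List.mem_toFinset.mp (Finset.mem_of_mem_erase hmem))
  have hlam : ∑ p ∈ lam.parts.toFinset, g p =
      g (x - 1) + ∑ p ∈ lam.parts.toFinset.erase (x - 1), g p := by
    rcases eq_or_ne (lam.part r) 0 with h0 | h0
    · rw [hx, h0, Finset.erase_eq_of_notMem lam.zero_notMem_parts_toFinset]
      simp [hg]
    · have hr := (part_eq_update_of_cells_eq_insert hb h).1
      refine (Finset.add_sum_erase _ g ?_).symm
      rw [List.mem_toFinset, hx, Nat.add_sub_cancel]
      exact mem_parts_iff.mpr ⟨h0, r, hr, rfl⟩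
  rw [q_eq_sum_parts, q_eq_sum_parts, parts_toFinset_of_cells_eq_insert hb h,
    Finset.sum_insert hxS, hlam]
  simp only [hg, hx, Nat.add_sub_cancel]
  ring

end StrictPartition

open StrictPartition in
/-- `λ^{i+}` is encoded as any `lam'` whose diagram is that of `lam` plus one box `b`; the content
of `b` is then automatically one of the inner-corner contents `x_i` of `lam`. -/
theorem statement15 (k : ℕ) :
    ∃ ξ : ℕ → ℚ,
      ∀ (lam lam' : StrictPartition) (b : ℕ × ℕ), b ∉ lam.cells →
        lam'.cells = insert b lam.cells →
        q k lam' - q k lam =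
          (∑ j ∈ Finset.range k, ξ j * ((content b).choose 2 : ℚ) ^ j) ∧
        q k lam' - q k lam =
          ((content b + 1).choose 2 : ℚ) ^ k + ((content b - 1).choose 2 : ℚ) ^ k -
            2 * ((content b).choose 2 : ℚ) ^ k := by
  obtain ⟨ξ, hξ⟩ := exists_choose_two_pow_second_difference k
  refine ⟨ξ, fun lam lam' ⟨r, j⟩ hb h => ?_⟩
  have hdelta := q_sub_q_of_cells_eq_insert k hb h
  have hx : 1 ≤ content (r, j) := by
    rw [content_eq_part_add_one_of_cells_eq_insert hb h]
    exact Nat.le_add_left 1 _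
  exact ⟨hdelta.trans (hξ _ hx), hdelta⟩
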